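/- Let L be a bounded chain and f : L^n → L nondecreasing and weakly R̄_f-min homogeneous. Then f is weakly R̄_f-max homogeneous if and only if f is weakly horizontally R̄_f-maxitive. -/

import Mathlib

/-- Ternary median. -/
def med3 {L : Type*} [Lattice L] (a b c : L) : L := (a ⊔ b) ⊓ (b ⊔ c) ⊓ (c ⊔ a)

/-- The set L_n^{(0,2)} of vectors of the form med(c, e, d) with e a Boolean vector. -/
def L02 (L : Type*) [Lattice L] [BoundedOrder L] (n : ℕ) : Set (Fin n → L) :=
  {x | ∃ (e : Fin n → L) (c d : L), (∀ i, e i = ⊥ ∨ e i = ⊤) ∧ ∀ i, x i = med3 c (e i) d}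

/-!
A vector of `L_n^{(0,2)}` is just a vector taking at most two values `u ≤ v`, so
`L_n^{(0,2)}` is stable under every nondecreasing map applied componentwise, in particular
under `x ↦ x ∧ c`, `x ↦ x ∨ c` and `x ↦ [x]_c`.

Since `x ≤ [x]_c ∨ c`, max homogeneity gives `f x ≤ c ∨ f [x]_c`; meeting with `f x` and
distributing yields `f x = f (x ∧ c) ∨ f [x]_c` by min homogeneity. Conversely, horizontal
maxitivity at `x ∨ c`, where `(x ∨ c) ∧ c` is the constant `c` (which `f` fixes) and
`[x ∨ c]_c = [x]_c`, gives `f (x ∨ c) = c ∨ f [x]_c`, and maxitivity at `x` together with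
`f (x ∧ c) ≤ c` shows that this is `f x ∨ c`.
-/

section L02

variable {L : Type*} {n : ℕ}

lemma med3_bot_middle [Lattice L] [OrderBot L] (a d : L) : med3 a ⊥ d = a ⊓ d := by
  simp only [med3, sup_bot_eq, bot_sup_eq]
  exact inf_eq_left.mpr (inf_le_right.trans le_sup_left)

lemma med3_top_middle [Lattice L] [OrderTop L] (a d : L) : med3 a ⊤ d = d ⊔ a := by
  simp [med3]

lemma mem_L02_iff [Lattice L] [BoundedOrder L] {x : Fin n → L} :
    x ∈ L02 L n ↔ ∃ u v : L, u ≤ v ∧ ∀ i, x i = u ∨ x i = v := by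
  classical
  constructor
  · rintro ⟨e, c, d, he, hx⟩
    refine ⟨c ⊓ d, d ⊔ c, inf_le_left.trans le_sup_right, fun i => ?_⟩
    rcases he i with h | h
    · exact Or.inl (by rw [hx i, h, med3_bot_middle])
    · exact Or.inr (by rw [hx i, h, med3_top_middle])
  · rintro ⟨u, v, huv, hx⟩
    refine ⟨fun i => if x i = u then ⊥ else ⊤, u, v, fun i => ?_, fun i => ?_⟩
    · by_cases h : x i = u <;> simp [h]
    · show x i = med3 u (if x i = u then ⊥ else ⊤) v
      by_cases h : x i = u
      · rw [if_pos h, med3_bot_middle, inf_eq_left.mpr huv, h]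
      · rw [if_neg h, med3_top_middle, sup_eq_left.mpr huv]
        exact (hx i).resolve_left h

lemma const_mem_L02 [Lattice L] [BoundedOrder L] (c : L) : (fun _ : Fin n => c) ∈ L02 L n :=
  mem_L02_iff.mpr ⟨c, c, le_rfl, fun _ => Or.inl rfl⟩

lemma comp_mem_L02_of_monotone [Lattice L] [BoundedOrder L] {x : Fin n → L} (hx : x ∈ L02 L n)
    {g : L → L} (hg : Monotone g) : (fun i => g (x i)) ∈ L02 L n := by
  obtain ⟨u, v, huv, hx⟩ := mem_L02_iff.mp hx
  exact mem_L02_iff.mpr ⟨g u, g v, hg huv, fun i => (hx i).imp (congrArg g) (congrArg g)⟩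

end L02

section Cut

variable {L : Type*}

lemma monotone_ite_le_bot [Preorder L] [OrderBot L] [DecidableLE L] (c : L) :
    Monotone fun a : L => if a ≤ c then ⊥ else a := by
  intro a b hab
  by_cases hb : b ≤ c
  · simp [hb, hab.trans hb]
  · by_cases ha : a ≤ c <;> simp [ha, hb, hab]

lemma ite_le_bot_le [Preorder L] [OrderBot L] [DecidableLE L] (a c : L) :
    (if a ≤ c then ⊥ else a) ≤ a := by
  split_ifs <;> simp

lemma le_ite_le_bot_sup [SemilatticeSup L] [OrderBot L] [DecidableLE L] (a c : L) :
    a ≤ (if a ≤ c then ⊥ else a) ⊔ c := by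
  split_ifs with h
  · simpa using h
  · exact le_sup_left

lemma ite_sup_le_bot [LinearOrder L] [OrderBot L] (a c : L) :
    (if a ⊔ c ≤ c then ⊥ else a ⊔ c) = if a ≤ c then ⊥ else a := by
  by_cases h : a ≤ c
  · simp [h]
  · simp [h, sup_eq_left.mpr (not_le.mp h).le]

end Cut

section Homogeneity

variable {ι L : Type*}

lemma apply_const_eq_of_inf_top [SemilatticeInf L] [OrderTop L] {f : (ι → L) → L} {c : L}
    (hmin : f (fun _ => ⊤ ⊓ c) = f (fun _ => ⊤) ⊓ c) (hc : c ≤ f fun _ => ⊤) :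
    f (fun _ => c) = c := by
  simpa [hc] using hmin

lemma apply_eq_sup_of_max_homogeneous [DistribLattice L] [OrderBot L] [DecidableLE L]
    {f : (ι → L) → L} (hmono : Monotone f) {x : ι → L} {c : L}
    (hmin : f (fun i => x i ⊓ c) = f x ⊓ c)
    (hmax : f (fun i => (if x i ≤ c then ⊥ else x i) ⊔ c) =
      f (fun i => if x i ≤ c then ⊥ else x i) ⊔ c) :
    f x = f (fun i => x i ⊓ c) ⊔ f (fun i => if x i ≤ c then ⊥ else x i) := by
  set r := f fun i => if x i ≤ c then ⊥ else x i
  have hr : r ≤ f x := hmono fun i => ite_le_bot_le (x i) c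
  have hx : f x ≤ c ⊔ r := by
    calc f x ≤ f (fun i => (if x i ≤ c then ⊥ else x i) ⊔ c) :=
          hmono fun i => le_ite_le_bot_sup (x i) c
      _ = c ⊔ r := by rw [hmax, sup_comm]
  calc f x = f x ⊓ (c ⊔ r) := (inf_eq_left.mpr hx).symm
    _ = f x ⊓ c ⊔ r := by rw [inf_sup_left, inf_eq_right.mpr hr]
    _ = f (fun i => x i ⊓ c) ⊔ r := by rw [hmin]

lemma apply_sup_eq_of_maxitive [LinearOrder L] [OrderBot L] {f : (ι → L) → L} {x : ι → L}
    {c : L} (hconst : f (fun _ => c) = c) (hmin : f (fun i => x i ⊓ c) = f x ⊓ c)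
    (hsplit : f x = f (fun i => x i ⊓ c) ⊔ f (fun i => if x i ≤ c then ⊥ else x i))
    (hsplit_sup : f (fun i => x i ⊔ c) = f (fun i => (x i ⊔ c) ⊓ c) ⊔
      f (fun i => if x i ⊔ c ≤ c then ⊥ else x i ⊔ c)) :
    f (fun i => x i ⊔ c) = f x ⊔ c := by
  have hlow : f (fun i => x i ⊓ c) ≤ c := hmin.le.trans inf_le_right
  have hlower : (fun i => (x i ⊔ c) ⊓ c) = fun _ => c :=
    funext fun i => inf_eq_right.mpr le_sup_right
  have hupper : (fun i => if x i ⊔ c ≤ c then ⊥ else x i ⊔ c) =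
      fun i => if x i ≤ c then ⊥ else x i :=
    funext fun i => ite_sup_le_bot (x i) c
  rw [hlower, hupper, hconst] at hsplit_sup
  rw [hsplit_sup, hsplit, sup_right_comm, sup_eq_right.mpr hlow, sup_comm]

end Homogeneity

/-- for a nondecreasing weakly R̄_f-min homogeneous function on a
bounded chain, weak R̄_f-max homogeneity is equivalent to weak horizontal
R̄_f-maxitivity. -/
theorem stmt5 {L : Type*} [LinearOrder L] [BoundedOrder L] {n : ℕ}
    (f : (Fin n → L) → L) (hmono : Monotone f)
    (hmin : ∀ x ∈ L02 L n, ∀ c ∈ Set.Icc (f fun _ => (⊥ : L)) (f fun _ => ⊤),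
      f (fun i => x i ⊓ c) = f x ⊓ c) :
    (∀ x ∈ L02 L n, ∀ c ∈ Set.Icc (f fun _ => (⊥ : L)) (f fun _ => ⊤),
        f (fun i => x i ⊔ c) = f x ⊔ c) ↔
    (∀ x ∈ L02 L n, ∀ c ∈ Set.Icc (f fun _ => (⊥ : L)) (f fun _ => ⊤),
        f x = f (fun i => x i ⊓ c) ⊔ f (fun i => if x i ≤ c then ⊥ else x i)) := by
  constructor
  · intro hmax x hx c hc
    exact apply_eq_sup_of_max_homogeneous hmono (hmin x hx c hc)
      (hmax _ (comp_mem_L02_of_monotone hx (monotone_ite_le_bot c)) c hc)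
  · intro hsplit x hx c hc
    have hconst : f (fun _ => c) = c :=
      apply_const_eq_of_inf_top (hmin _ (const_mem_L02 ⊤) c hc) hc.2
    exact apply_sup_eq_of_maxitive hconst (hmin x hx c hc) (hsplit x hx c hc)
      (hsplit _ (comp_mem_L02_of_monotone hx (monotone_id.sup monotone_const)) c hc)
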